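/- arXiv:1707.07880 — 7 statements merged into one kernel-verified Lean document; each statement's English description precedes it below -/
import Mathlib

section
/- Let d : ℝ → ℝ be positive and 1-Lipschitz (|d(x) − d(y)| ≤ |x − y| for all x,y), and assume ∫_0^∞ dx/d(x) = +∞ and ∫_{−∞}^0 dx/d(x) = +∞. Then for every c ∈ (0,1) there exists a strictly increasing sequence (s_n)_{n∈ℤ} of real numbers with s_n → +∞ as n → +∞ and s_n → −∞ as n → −∞, such that ∫_{s_n}^{s_{n+1}} dx/d(x) = c for every n ∈ ℤ, and for every n and every x ∈ [s_n, s_{n+1}] one has (c/(1+c))·d(x) ≤ s_{n+1} − s_n ≤ (c/(1−c))·d(x). -/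
/-!
Let `F(t) = ∫₀ᵗ dx/d(x)`. Positivity of `d` makes `F` strictly increasing and the divergence
of both improper integrals makes it a bijection of `ℝ`, so `s n := F⁻¹(n c)` cuts `ℝ` into
intervals of `1/d`-mass exactly `c`. On `[s n, s (n+1)]`, of length `L`, the Lipschitz bound
gives `d x - L ≤ d y ≤ d x + L` for all `x, y`, whence `L / (d x + L) ≤ c ≤ L / (d x - L)`,
which rearranges to the two length estimates.
-/

open MeasureTheory Filter Set intervalIntegral

section Primitive

variable {f : ℝ → ℝ}

theorem monotone_intervalIntegral_of_nonneg (hf : ∀ a b, IntervalIntegrable f volume a b)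
    (hf0 : ∀ x, 0 ≤ f x) (a : ℝ) : Monotone fun t => ∫ x in a..t, f x := fun s t hst => by
  have h := integral_interval_sub_left (hf a t) (hf a s)
  linarith [integral_nonneg (μ := volume) hst fun x _ => hf0 x]

theorem strictMono_intervalIntegral_of_pos (hf : ∀ a b, IntervalIntegrable f volume a b)
    (hpos : ∀ x, 0 < f x) (a : ℝ) : StrictMono fun t => ∫ x in a..t, f x := fun s t hst => by
  have h := integral_interval_sub_left (hf a t) (hf a s)
  linarith [intervalIntegral_pos_of_pos (hf s t) hpos hst]

theorem tendsto_intervalIntegral_atTop_of_not_integrableOn_Ioi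
    (hf : ∀ a b, IntervalIntegrable f volume a b) (hf0 : ∀ x, 0 ≤ f x)
    {a : ℝ} (h : ¬IntegrableOn f (Ioi a)) :
    Tendsto (fun t => ∫ x in a..t, f x) atTop atTop := by
  refine tendsto_atTop_atTop_of_monotone' (monotone_intervalIntegral_of_nonneg hf hf0 a) ?_
  rintro ⟨I, hI⟩
  refine h (integrableOn_Ioi_of_intervalIntegral_norm_bounded I a
    (fun t => (hf a t).1) tendsto_id (Eventually.of_forall fun t => ?_))
  simpa only [Real.norm_of_nonneg (hf0 _)] using hI (mem_range_self t)

theorem tendsto_intervalIntegral_atBot_of_not_integrableOn_Iic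
    (hf : ∀ a b, IntervalIntegrable f volume a b) (hf0 : ∀ x, 0 ≤ f x)
    {a : ℝ} (h : ¬IntegrableOn f (Iic a)) :
    Tendsto (fun t => ∫ x in a..t, f x) atBot atBot := by
  refine tendsto_atBot_atBot_of_monotone' (monotone_intervalIntegral_of_nonneg hf hf0 a) ?_
  rintro ⟨I, hI⟩
  refine h (integrableOn_Iic_of_intervalIntegral_norm_bounded (-I) a
    (fun t => (hf t a).1) tendsto_id (Eventually.of_forall fun t => ?_))
  have hIt : I ≤ ∫ x in a..t, f x := hI (mem_range_self t)
  simp only [Real.norm_of_nonneg (hf0 _)]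
  rw [integral_symm]
  linarith

theorem exists_strictMono_intervalIntegral_eq (hf : ∀ a b, IntervalIntegrable f volume a b)
    (hpos : ∀ x, 0 < f x) {a : ℝ} (htop : ¬IntegrableOn f (Ioi a)) (hbot : ¬IntegrableOn f (Iic a))
    {c : ℝ} (hc : 0 < c) :
    ∃ s : ℤ → ℝ, StrictMono s ∧ Tendsto s atTop atTop ∧ Tendsto s atBot atBot ∧
      ∀ n : ℤ, ∫ x in s n..s (n + 1), f x = c := by
  have hf0 : ∀ x, 0 ≤ f x := fun x => (hpos x).le
  have hsurj : Function.Surjective fun t => ∫ x in a..t, f x :=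
    (continuous_primitive hf a).surjective
      (tendsto_intervalIntegral_atTop_of_not_integrableOn_Ioi hf hf0 htop)
      (tendsto_intervalIntegral_atBot_of_not_integrableOn_Iic hf hf0 hbot)
  let e := (strictMono_intervalIntegral_of_pos hf hpos a).orderIsoOfSurjective _ hsurj
  have he (y : ℝ) : ∫ x in a..e.symm y, f x = y :=
    StrictMono.orderIsoOfSurjective_self_symm_apply _ _ hsurj y
  have hmul : StrictMono fun n : ℤ => (n : ℝ) * c :=
    fun m n hmn => mul_lt_mul_of_pos_right (Int.cast_lt.2 hmn) hc
  refine ⟨fun n => e.symm (n * c), e.symm.strictMono.comp hmul,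
    e.symm.tendsto_atTop.comp (tendsto_intCast_atTop_atTop.atTop_mul_const hc),
    e.symm.tendsto_atBot.comp ((tendsto_intCast_atBot_iff.2 tendsto_id).atBot_mul_const hc),
    fun n => ?_⟩
  rw [← integral_interval_sub_left (hf _ _) (hf _ _), he, he]
  push_cast
  ring

end Primitive

section Lipschitz

variable {d : ℝ → ℝ} {a b x : ℝ}

theorem LipschitzWith.abs_sub_le_of_mem_Icc (hd : LipschitzWith 1 d) (hx : x ∈ Icc a b)
    {y : ℝ} (hy : y ∈ Icc a b) : |d y - d x| ≤ b - a :=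
  calc |d y - d x| = dist (d y) (d x) := (Real.dist_eq _ _).symm
    _ ≤ dist y x := by simpa using hd.dist_le_mul y x
    _ ≤ b - a := Real.dist_le_of_mem_Icc hy hx

theorem intervalIntegrable_one_div (hd : LipschitzWith 1 d) (hpos : ∀ y, 0 < d y) (a b : ℝ) :
    IntervalIntegrable (fun y => 1 / d y) volume a b :=
  (continuous_const.div hd.continuous fun y => (hpos y).ne').intervalIntegrable a b

theorem div_add_le_integral_one_div (hd : LipschitzWith 1 d) (hpos : ∀ y, 0 < d y)
    (hx : x ∈ Icc a b) : (b - a) / (d x + (b - a)) ≤ ∫ y in a..b, 1 / d y := by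
  have hab : a ≤ b := hx.1.trans hx.2
  calc (b - a) / (d x + (b - a)) = ∫ _ in a..b, 1 / (d x + (b - a)) := by
        rw [intervalIntegral.integral_const, smul_eq_mul, mul_one_div]
    _ ≤ ∫ y in a..b, 1 / d y :=
        integral_mono_on hab intervalIntegrable_const (intervalIntegrable_one_div hd hpos a b)
          fun y hy => one_div_le_one_div_of_le (hpos y)
            (by linarith [(abs_le.1 (hd.abs_sub_le_of_mem_Icc hx hy)).2])

theorem integral_one_div_le_div_sub (hd : LipschitzWith 1 d) (hpos : ∀ y, 0 < d y)
    (hx : x ∈ Icc a b) (hlt : b - a < d x) : ∫ y in a..b, 1 / d y ≤ (b - a) / (d x - (b - a)) := by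
  have hab : a ≤ b := hx.1.trans hx.2
  calc ∫ y in a..b, 1 / d y ≤ ∫ _ in a..b, 1 / (d x - (b - a)) :=
        integral_mono_on hab (intervalIntegrable_one_div hd hpos a b) intervalIntegrable_const
          fun y hy => one_div_le_one_div_of_le (sub_pos.2 hlt)
            (by linarith [(abs_le.1 (hd.abs_sub_le_of_mem_Icc hx hy)).1])
    _ = (b - a) / (d x - (b - a)) := by
        rw [intervalIntegral.integral_const, smul_eq_mul, mul_one_div]

theorem sub_le_div_mul_of_integral_one_div_eq (hd : LipschitzWith 1 d) (hpos : ∀ y, 0 < d y)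
    (hx : x ∈ Icc a b) {c : ℝ} (hc : c < 1) (hint : ∫ y in a..b, 1 / d y = c) :
    b - a ≤ c / (1 - c) * d x := by
  have h := div_add_le_integral_one_div hd hpos hx
  rw [hint, div_le_iff₀ (by linarith [hpos x, hx.1.trans hx.2])] at h
  rw [div_mul_eq_mul_div, le_div_iff₀ (sub_pos.2 hc)]
  linarith

theorem div_mul_le_sub_of_integral_one_div_eq (hd : LipschitzWith 1 d) (hpos : ∀ y, 0 < d y)
    (hx : x ∈ Icc a b) {c : ℝ} (hc : 0 < c) (hint : ∫ y in a..b, 1 / d y = c) :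
    c / (1 + c) * d x ≤ b - a := by
  rw [div_mul_eq_mul_div, div_le_iff₀ (by linarith)]
  rcases le_or_gt (d x) (b - a) with hle | hlt
  · linarith [mul_le_mul_of_nonneg_left hle hc.le, hx.1.trans hx.2]
  · have h := integral_one_div_le_div_sub hd hpos hx hlt
    rw [hint, le_div_iff₀ (sub_pos.2 hlt)] at h
    linarith

end Lipschitz

theorem stmt2
    (d : ℝ → ℝ) (hd0 : ∀ x, 0 < d x)
    (hlip : ∀ x y : ℝ, |d x - d y| ≤ |x - y|)
    (hdivPos : ∫⁻ x in Set.Ioi (0 : ℝ), ENNReal.ofReal (1 / d x) = ⊤)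
    (hdivNeg : ∫⁻ x in Set.Iio (0 : ℝ), ENNReal.ofReal (1 / d x) = ⊤) :
    ∀ c ∈ Set.Ioo (0 : ℝ) 1, ∃ s : ℤ → ℝ,
      StrictMono s ∧ Tendsto s atTop atTop ∧ Tendsto s atBot atBot ∧
      (∀ n : ℤ, ∫ x in Set.Ico (s n) (s (n + 1)), 1 / d x = c) ∧
      (∀ n : ℤ, ∀ x ∈ Set.Icc (s n) (s (n + 1)),
        c / (1 + c) * d x ≤ s (n + 1) - s n ∧ s (n + 1) - s n ≤ c / (1 - c) * d x) := by
  rintro c ⟨hc0, hc1⟩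
  have hd : LipschitzWith 1 d := .of_dist_le_mul fun x y => by simpa [Real.dist_eq] using hlip x y
  have hintegrable : ∀ a b, IntervalIntegrable (fun x => 1 / d x) volume a b :=
    intervalIntegrable_one_div hd hd0
  have hdiv {S : Set ℝ} (h : ∫⁻ x in S, ENNReal.ofReal (1 / d x) = ⊤) :
      ¬IntegrableOn (fun x => 1 / d x) S := fun hi => hi.setLIntegral_lt_top.ne h
  obtain ⟨s, hmono, htop, hbot, hint⟩ := exists_strictMono_intervalIntegral_eq hintegrable
    (fun x => one_div_pos.2 (hd0 x)) (hdiv hdivPos)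
    (by rw [integrableOn_Iic_iff_integrableOn_Iio]; exact hdiv hdivNeg) hc0
  refine ⟨s, hmono, htop, hbot, fun n => ?_, fun n x hx => ⟨?_, ?_⟩⟩
  · rw [integral_Ico_eq_integral_Ioc, ← integral_of_le (hmono (lt_add_one n)).le, hint n]
  · exact div_mul_le_sub_of_integral_one_div_eq hd hd0 hx hc0 (hint n)
  · exact sub_le_div_mul_of_integral_one_div_eq hd hd0 hx hc1 (hint n)
end

section
/- Let Γ ⊂ ℝ be a Lebesgue-measurable set. The following are equivalent: (a) Γ is relatively dense, i.e. there exist γ > 0 and ℓ > 0 such that |Γ ∩ [x, x+ℓ)| ≥ γℓ for every x ∈ ℝ; (b) there exists y > 0 such that inf_{x∈ℝ} ω_{x+iy}(Γ) > 0; (c) for every y > 0, inf_{x∈ℝ} ω_{x+iy}(Γ) > 0. -/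
open MeasureTheory Filter Set

/-- The Poisson kernel of the upper half-plane at `z`. -/
noncomputable def poissonKernelUHP (z : ℂ) (t : ℝ) : ℝ :=
  (1 / Real.pi) * z.im / ((z.re - t) ^ 2 + z.im ^ 2)

/-- The harmonic measure of `E ⊆ ℝ` at the point `z` of the upper half-plane. -/
noncomputable def harmonicMeasure (z : ℂ) (E : Set ℝ) : ℝ :=
  ∫ t in E, poissonKernelUHP z t

/-!
The harmonic measure `ω_{x+iy}` is the Cauchy distribution with location `x` and scale `y`: a
probability measure whose density is at most `1/(πy)` everywhere and at least
`y/(π(ℓ² + y²))` within distance `ℓ` of `x`.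

If `Γ` meets every interval `[x, x+ℓ)` in measure `γℓ`, the lower bound on the density gives
`ω_{x+iy}(Γ) ≥ γℓ · y/(π(ℓ² + y²))` for every `y > 0`. Conversely, if `ω_{x+iy}(Γ) ≥ δ` for all
`x`, choose `L` with `ω_{x+iy}([x-L, x+L)) = (2/π) arctan(L/y) > 1 - δ/2`; then `Γ ∩ [x-L, x+L)`
carries harmonic measure at least `δ/2`, and the upper bound on the density forces
`|Γ ∩ [x-L, x+L)| ≥ πyδ/2`.
-/

open Real ProbabilityTheory Topology

section PoissonKernel

variable {z : ℂ}

theorem poissonKernelUHP_eq_cauchyPDFReal (hz : 0 ≤ z.im) :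
    poissonKernelUHP z = cauchyPDFReal z.re z.im.toNNReal := by
  ext t
  rw [cauchyPDFReal_def, Real.coe_toNNReal _ hz, poissonKernelUHP]
  ring

theorem poissonKernelUHP_eq (hz : z.im ≠ 0) (t : ℝ) :
    poissonKernelUHP z t = (π * z.im)⁻¹ * (1 + ((t - z.re) / z.im) ^ 2)⁻¹ := by
  rw [poissonKernelUHP]
  field_simp
  ring

theorem poissonKernelUHP_nonneg (hz : 0 ≤ z.im) (t : ℝ) : 0 ≤ poissonKernelUHP z t := by
  rw [poissonKernelUHP]
  positivity

theorem poissonKernelUHP_le (hz : 0 < z.im) (t : ℝ) : poissonKernelUHP z t ≤ (π * z.im)⁻¹ := by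
  rw [poissonKernelUHP_eq hz.ne']
  exact mul_le_of_le_one_right (by positivity) (inv_le_one_of_one_le₀ (by nlinarith))

theorem le_poissonKernelUHP_of_abs_sub_le (hz : 0 < z.im) {ℓ t : ℝ} (ht : |z.re - t| ≤ ℓ) :
    1 / π * z.im / (ℓ ^ 2 + z.im ^ 2) ≤ poissonKernelUHP z t := by
  have hsq : (z.re - t) ^ 2 ≤ ℓ ^ 2 := sq_le_sq' (abs_le.1 ht).1 (abs_le.1 ht).2
  rw [poissonKernelUHP]
  gcongr

theorem integrable_poissonKernelUHP (hz : 0 ≤ z.im) : Integrable (poissonKernelUHP z) := by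
  rw [poissonKernelUHP_eq_cauchyPDFReal hz]
  exact integrable_cauchyPDFReal _

theorem integral_poissonKernelUHP (hz : 0 < z.im) : ∫ t, poissonKernelUHP z t = 1 := by
  rw [poissonKernelUHP_eq_cauchyPDFReal hz.le]
  exact integral_cauchyPDFReal_eq_one _ (by simpa using hz)

theorem intervalIntegral_poissonKernelUHP (hz : 0 < z.im) (a b : ℝ) :
    ∫ t in a..b, poissonKernelUHP z t
      = (arctan ((b - z.re) / z.im) - arctan ((a - z.re) / z.im)) / π := by
  have key : ∫ t in a..b, (1 + ((t - z.re) / z.im) ^ 2)⁻¹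
      = z.im * (arctan ((b - z.re) / z.im) - arctan ((a - z.re) / z.im)) := by
    rw [intervalIntegral.integral_comp_sub_right (fun s => (1 + (s / z.im) ^ 2)⁻¹),
      intervalIntegral.integral_comp_div (fun u => (1 + u ^ 2)⁻¹) hz.ne', integral_inv_one_add_sq,
      smul_eq_mul]
  simp_rw [poissonKernelUHP_eq hz.ne']
  rw [intervalIntegral.integral_const_mul, key]
  field_simp

end PoissonKernel

section HarmonicMeasure

variable {z : ℂ}

theorem harmonicMeasure_mono (hz : 0 ≤ z.im) {E F : Set ℝ} (h : E ⊆ F) :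
    harmonicMeasure z E ≤ harmonicMeasure z F :=
  setIntegral_mono_set (integrable_poissonKernelUHP hz).integrableOn
    (.of_forall (poissonKernelUHP_nonneg hz)) h.eventuallyLE

theorem harmonicMeasure_compl (hz : 0 < z.im) {S : Set ℝ} (hS : MeasurableSet S) :
    harmonicMeasure z Sᶜ = 1 - harmonicMeasure z S := by
  rw [eq_sub_iff_add_eq', harmonicMeasure, harmonicMeasure,
    integral_add_compl hS (integrable_poissonKernelUHP hz.le), integral_poissonKernelUHP hz]

theorem harmonicMeasure_le_inter_add_compl (hz : 0 ≤ z.im) (E : Set ℝ) {S : Set ℝ}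
    (hS : MeasurableSet S) :
    harmonicMeasure z E ≤ harmonicMeasure z (E ∩ S) + harmonicMeasure z Sᶜ := by
  rw [harmonicMeasure, ← integral_inter_add_sdiff hS (integrable_poissonKernelUHP hz).integrableOn]
  exact add_le_add le_rfl (harmonicMeasure_mono hz (E := E \ S) fun t ht => ht.2)

theorem harmonicMeasure_Ico (hz : 0 < z.im) {a b : ℝ} (hab : a ≤ b) :
    harmonicMeasure z (Ico a b)
      = (arctan ((b - z.re) / z.im) - arctan ((a - z.re) / z.im)) / π := by
  rw [harmonicMeasure, integral_Ico_eq_integral_Ioc, ← intervalIntegral.integral_of_le hab,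
    intervalIntegral_poissonKernelUHP hz]

theorem harmonicMeasure_Ico_sub_add {x y L : ℝ} (hy : 0 < y) (hL : 0 ≤ L) :
    harmonicMeasure ⟨x, y⟩ (Ico (x - L) (x + L)) = 2 * arctan (L / y) / π := by
  rw [harmonicMeasure_Ico (z := ⟨x, y⟩) hy (by linarith)]
  dsimp only
  rw [add_sub_cancel_left, sub_sub_cancel_left, neg_div, arctan_neg]
  ring

theorem exists_forall_harmonicMeasure_compl_Ico_lt {y ε : ℝ} (hy : 0 < y) (hε : 0 < ε) :
    ∃ L, 0 < L ∧ ∀ x : ℝ, harmonicMeasure ⟨x, y⟩ (Ico (x - L) (x + L))ᶜ < ε := by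
  have harctan : Tendsto (fun L => 2 * arctan (L / y) / π) atTop (𝓝 1) := by
    have h := ((tendsto_arctan_atTop.mono_right nhdsWithin_le_nhds).comp
      (tendsto_id.atTop_div_const hy)).const_mul 2 |>.div_const π
    rwa [mul_div_cancel₀ _ two_ne_zero, div_self pi_ne_zero] at h
  obtain ⟨L, hL, hL0⟩ :=
    ((harctan.eventually (lt_mem_nhds (sub_lt_self 1 hε))).and (eventually_gt_atTop 0)).exists
  refine ⟨L, hL0, fun x => ?_⟩
  rw [harmonicMeasure_compl (z := ⟨x, y⟩) hy measurableSet_Ico,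
    harmonicMeasure_Ico_sub_add hy hL0.le]
  linarith

theorem harmonicMeasure_le_mul_volumeReal (hz : 0 < z.im) {E : Set ℝ} (hE : volume E ≠ ⊤) :
    harmonicMeasure z E ≤ (π * z.im)⁻¹ * volume.real E := by
  refine (le_norm_self _).trans (norm_setIntegral_le_of_norm_le_const hE.lt_top fun t _ => ?_)
  rw [Real.norm_of_nonneg (poissonKernelUHP_nonneg hz.le t)]
  exact poissonKernelUHP_le hz t

theorem mul_volumeReal_le_harmonicMeasure (hz : 0 ≤ z.im) {E : Set ℝ} (hE : MeasurableSet E)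
    (hE' : volume E ≠ ⊤) {c : ℝ} (hc : ∀ t ∈ E, c ≤ poissonKernelUHP z t) :
    c * volume.real E ≤ harmonicMeasure z E :=
  setIntegral_ge_of_const_le_real hE hE' hc (integrable_poissonKernelUHP hz).integrableOn

theorem mul_sub_le_volumeReal_inter (hz : 0 < z.im) (E : Set ℝ) {S : Set ℝ} (hS : MeasurableSet S)
    (hS' : volume S ≠ ⊤) :
    π * z.im * (harmonicMeasure z E - harmonicMeasure z Sᶜ) ≤ volume.real (E ∩ S) := by
  have hsplit := harmonicMeasure_le_inter_add_compl hz.le E hS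
  have hvol := harmonicMeasure_le_mul_volumeReal hz
    (measure_ne_top_of_subset (inter_subset_right (s := E)) hS')
  rw [← le_inv_mul_iff₀ (by positivity)]
  linarith

end HarmonicMeasure

def IsRelativelyDense (Γ : Set ℝ) : Prop :=
  ∃ γ : ℝ, 0 < γ ∧ ∃ ℓ : ℝ, 0 < ℓ ∧ ∀ x : ℝ,
    ENNReal.ofReal (γ * ℓ) ≤ volume (Γ ∩ Set.Ico x (x + ℓ))

def HarmonicMeasureBoundedBelow (y : ℝ) (Γ : Set ℝ) : Prop :=
  ∃ δ : ℝ, 0 < δ ∧ ∀ x : ℝ, δ ≤ harmonicMeasure ⟨x, y⟩ Γ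

section RelativelyDense

variable {Γ : Set ℝ}

theorem IsRelativelyDense.harmonicMeasureBoundedBelow (hΓ : MeasurableSet Γ)
    (hdense : IsRelativelyDense Γ) {y : ℝ} (hy : 0 < y) : HarmonicMeasureBoundedBelow y Γ := by
  obtain ⟨γ, hγ, ℓ, hℓ, hvol⟩ := hdense
  set c := 1 / π * y / (ℓ ^ 2 + y ^ 2)
  refine ⟨c * (γ * ℓ), by positivity, fun x => ?_⟩
  set I := Ico x (x + ℓ)
  have hfin : volume (Γ ∩ I) ≠ ⊤ := measure_ne_top_of_subset inter_subset_right (by simp [I])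
  have hkernel : ∀ t ∈ Γ ∩ I, c ≤ poissonKernelUHP ⟨x, y⟩ t := fun t ht =>
    le_poissonKernelUHP_of_abs_sub_le (z := ⟨x, y⟩) hy
      (abs_sub_le_iff.2 ⟨by linarith [ht.2.1], by linarith [ht.2.2]⟩)
  calc c * (γ * ℓ) ≤ c * volume.real (Γ ∩ I) := by
        gcongr
        exact (ENNReal.ofReal_le_iff_le_toReal hfin).1 (hvol x)
    _ ≤ harmonicMeasure ⟨x, y⟩ (Γ ∩ I) :=
        mul_volumeReal_le_harmonicMeasure hy.le (hΓ.inter measurableSet_Ico) hfin hkernel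
    _ ≤ harmonicMeasure ⟨x, y⟩ Γ := harmonicMeasure_mono hy.le inter_subset_left

theorem HarmonicMeasureBoundedBelow.isRelativelyDense {y : ℝ}
    (hy : 0 < y) (hbdd : HarmonicMeasureBoundedBelow y Γ) : IsRelativelyDense Γ := by
  obtain ⟨δ, hδ, hω⟩ := hbdd
  obtain ⟨L, hL, hcompl⟩ := exists_forall_harmonicMeasure_compl_Ico_lt hy (half_pos hδ)
  refine ⟨π * y * δ / 2 / (2 * L), by positivity, 2 * L, by positivity, fun x => ?_⟩
  have hS : Ico (x + L - L) (x + L + L) = Ico x (x + 2 * L) := by congr 1 <;> ring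
  have hvol := mul_sub_le_volumeReal_inter (z := ⟨x + L, y⟩) hy Γ measurableSet_Ico
    (measure_Ico_lt_top (a := x + L - L) (b := x + L + L)).ne
  rw [div_mul_cancel₀ _ (by positivity), ← hS]
  refine ENNReal.ofReal_le_of_le_toReal ?_
  calc π * y * δ / 2 = π * y * (δ - δ / 2) := by ring
    _ ≤ π * y * (harmonicMeasure ⟨x + L, y⟩ Γ
          - harmonicMeasure ⟨x + L, y⟩ (Ico (x + L - L) (x + L + L))ᶜ) := by
        gcongr
        · exact hω (x + L)
        · exact (hcompl (x + L)).le
    _ ≤ volume.real (Γ ∩ Ico (x + L - L) (x + L + L)) := hvol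

end RelativelyDense

theorem stmt4 (Γ : Set ℝ) (hΓ : MeasurableSet Γ) :
    ((∃ γ : ℝ, 0 < γ ∧ ∃ ℓ : ℝ, 0 < ℓ ∧ ∀ x : ℝ,
        ENNReal.ofReal (γ * ℓ) ≤ volume (Γ ∩ Set.Ico x (x + ℓ)))
      ↔ (∃ y : ℝ, 0 < y ∧ ∃ δ : ℝ, 0 < δ ∧ ∀ x : ℝ,
          δ ≤ harmonicMeasure ⟨x, y⟩ Γ))
    ∧
    ((∃ γ : ℝ, 0 < γ ∧ ∃ ℓ : ℝ, 0 < ℓ ∧ ∀ x : ℝ,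
        ENNReal.ofReal (γ * ℓ) ≤ volume (Γ ∩ Set.Ico x (x + ℓ)))
      ↔ (∀ y : ℝ, 0 < y → ∃ δ : ℝ, 0 < δ ∧ ∀ x : ℝ,
          δ ≤ harmonicMeasure ⟨x, y⟩ Γ)) := by
  have hc (h : IsRelativelyDense Γ) {y : ℝ} (hy : 0 < y) : HarmonicMeasureBoundedBelow y Γ :=
    IsRelativelyDense.harmonicMeasureBoundedBelow hΓ h hy
  have ha {y : ℝ} (hy : 0 < y) (h : HarmonicMeasureBoundedBelow y Γ) : IsRelativelyDense Γ :=
    HarmonicMeasureBoundedBelow.isRelativelyDense hy h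
  exact ⟨⟨fun h => ⟨1, one_pos, hc h one_pos⟩, fun ⟨_, hy, h⟩ => ha hy h⟩,
    ⟨fun h _ hy => hc h hy, fun h => ha one_pos (h 1 one_pos)⟩⟩
end

section
/- Let (I_n)_{n∈ℤ} be a partition of ℝ into bounded half-open intervals and let N ≥ 1. Define the positive Borel measure μ on ℂ by μ(A) = Σ_{n∈ℤ} |{x ∈ I_n : x + i|I_n|/N ∈ A}| (the sum of the arclength measures of the horizontal segments I_n × {|I_n|/N}). Then: (a) for every bounded interval I ⊂ ℝ, μ(S(I)) ≤ |I|; (b) if moreover L ⊂ ℂ⁺ is a nonempty set, d(x) = dist(x, L), α ≥ 1 is such that α^{−1} d(x) ≤ |I_n| ≤ α d(x) for every n and every x ∈ I_n, N₀ ≥ 1, and N ≥ √2·(1+α)·N₀, then for every bounded interval I ⊂ ℝ with S(I^{N₀}) ∩ L ≠ ∅ one has μ(S(I)) = |I|. -/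
/-!
The segment over `I_n` sits at height `|I_n|/N`, so `μ(S(I))` is the length of the part of `I`
covered by those `I_n` with `|I_n|/N < |I|`; since the `I_n` are disjoint this is at most `|I|`.
If some `w ∈ L` lies in `S(I^{N₀})`, every `x ∈ I` is within `√2 N₀ |I|` of `w`, so an `I_n`
meeting `I` at `x` has `|I_n| ≤ α d(x) < √2 α N₀ |I| ≤ N |I|`. Then all of `I` is counted, because
the `I_n` cover `ℝ`.
-/

open MeasureTheory Filter Set
open scoped ENNReal

/-- The measure putting arclength measure on the horizontal segments
`I_n × {|I_n|/N}`, where `I_n = [s n, s (n+1))`, evaluated on a set `A ⊆ ℂ`. -/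
noncomputable def segMeasure (s : ℤ → ℝ) (N : ℝ) (A : Set ℂ) : ℝ≥0∞ :=
  ∑' n : ℤ, volume {x ∈ Set.Ico (s n) (s (n + 1)) |
    (x : ℂ) + Complex.I * ((s (n + 1) - s n) / N) ∈ A}

/-- The Carleson window over the interval `(a, b)`. -/
def carlesonWindow (a b : ℝ) : Set ℂ :=
  {z : ℂ | z.re ∈ Set.Ioo a b ∧ z.im ∈ Set.Ioo 0 (b - a)}

theorem Monotone.iUnion_Ico_add_one_eq_univ {β : Type*} [LinearOrder β] [NoMaxOrder β]
    {s : ℤ → β} (hs : Monotone s) (htop : Tendsto s atTop atTop) (hbot : Tendsto s atBot atBot) :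
    ⋃ n, Ico (s n) (s (n + 1)) = univ := by
  refine eq_univ_of_forall fun x => ?_
  obtain ⟨a, ha⟩ := (hbot.eventually (eventually_le_atBot x)).exists
  have hunbdd : ¬BddAbove (s '' Ici a) := by
    rintro ⟨M, hM⟩
    obtain ⟨k, hak, hk⟩ :=
      ((eventually_ge_atTop a).and (htop.eventually (eventually_gt_atTop M))).exists
    exact hk.not_ge (hM ⟨k, hak, rfl⟩)
  have hx : x ∈ ⋃ i ∈ Ici a, Ico (s i) (s (Order.succ i)) := by
    rw [biUnion_Ici_Ico_map_succ (fun i hi => hs hi) hunbdd]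
    exact ha
  simp only [mem_iUnion, Int.succ_eq_succ] at hx ⊢
  obtain ⟨i, -, hi⟩ := hx
  exact ⟨i, hi⟩

theorem Monotone.pairwise_disjoint_on_Ico_add_one {β : Type*} [Preorder β] {s : ℤ → β}
    (hs : Monotone s) : Pairwise (Function.onFun Disjoint fun n => Ico (s n) (s (n + 1))) := by
  simpa using hs.pairwise_disjoint_on_Ico_succ

theorem segMeasure_carlesonWindow (s : ℤ → ℝ) (N a b : ℝ) :
    segMeasure s N (carlesonWindow a b) = ∑' n, volume
      {x ∈ Ico (s n) (s (n + 1)) ∩ Ioo a b | (s (n + 1) - s n) / N ∈ Ioo 0 (b - a)} := by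
  simp [segMeasure, carlesonWindow, and_assoc]

theorem dist_ofReal_lt_of_mem_carlesonWindow {a b x : ℝ} {z : ℂ} (hx : x ∈ Icc a b)
    (hz : z ∈ carlesonWindow a b) : dist (x : ℂ) z < √2 * (b - a) := by
  obtain ⟨⟨hza, hzb⟩, hz0, hzb'⟩ := hz
  have hre : |x - z.re| < b - a := abs_sub_lt_iff.2 ⟨by linarith [hx.2], by linarith [hx.1]⟩
  have him : |z.im| < b - a := by rwa [abs_of_pos hz0]
  calc dist (x : ℂ) z ≤ √2 * max |x - z.re| |(-z.im)| := by
        simpa [dist_eq_norm] using Complex.norm_le_sqrt_two_mul_max ((x : ℂ) - z)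
    _ < √2 * (b - a) := by
        gcongr
        rw [abs_neg]
        exact max_lt hre him

theorem segMeasure_carlesonWindow_le {s : ℤ → ℝ} (hs : Monotone s) (N a b : ℝ) :
    segMeasure s N (carlesonWindow a b) ≤ ENNReal.ofReal (b - a) := by
  rw [segMeasure_carlesonWindow]
  calc _ ≤ ∑' n, volume (Ico (s n) (s (n + 1)) ∩ Ioo a b) :=
        ENNReal.tsum_le_tsum fun n => measure_mono (sep_subset _ _)
    _ ≤ volume (⋃ n, Ico (s n) (s (n + 1)) ∩ Ioo a b) :=
        tsum_meas_le_meas_iUnion_of_disjoint _ (fun _ => measurableSet_Ico.inter measurableSet_Ioo)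
          fun _ _ hmn => (hs.pairwise_disjoint_on_Ico_add_one hmn).mono inter_subset_left
            inter_subset_left
    _ ≤ volume (Ioo a b) := measure_mono (iUnion_subset fun _ => inter_subset_right)
    _ = ENNReal.ofReal (b - a) := Real.volume_Ioo

theorem segMeasure_carlesonWindow_eq {s : ℤ → ℝ} (hs : Monotone s)
    (htop : Tendsto s atTop atTop) (hbot : Tendsto s atBot atBot) {N a b : ℝ} (hN : 0 < N)
    (hlen : ∀ n, ∀ x ∈ Ico (s n) (s (n + 1)), x ∈ Ioo a b → s (n + 1) - s n < N * (b - a)) :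
    segMeasure s N (carlesonWindow a b) = ENNReal.ofReal (b - a) := by
  have hheight : ∀ n, ∀ x ∈ Ico (s n) (s (n + 1)) ∩ Ioo a b,
      (s (n + 1) - s n) / N ∈ Ioo 0 (b - a) := fun n x ⟨hxn, hxab⟩ =>
    ⟨div_pos (by linarith [hxn.1, hxn.2]) hN, (div_lt_iff₀' hN).2 (hlen n x hxn hxab)⟩
  rw [segMeasure_carlesonWindow, ← Real.volume_Ioo]
  simp_rw [sep_eq_self_iff_mem_true.2 (hheight _)]
  rw [← measure_iUnion (fun _ _ hmn => (hs.pairwise_disjoint_on_Ico_add_one hmn).mono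
      inter_subset_left inter_subset_left) fun _ => measurableSet_Ico.inter measurableSet_Ioo,
    ← iUnion_inter, hs.iUnion_Ico_add_one_eq_univ htop hbot, univ_inter]

theorem stmt7_general
    (s : ℤ → ℝ) (hmono : StrictMono s)
    (htop : Tendsto s atTop atTop) (hbot : Tendsto s atBot atBot)
    (N : ℝ) :
    (∀ a b : ℝ, a < b →
      segMeasure s N (carlesonWindow a b) ≤ ENNReal.ofReal (b - a))
    ∧
    (∀ L : Set ℂ, L.Nonempty → (∀ w ∈ L, 0 < w.im) →
      ∀ α : ℝ, 1 ≤ α →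
      (∀ n : ℤ, ∀ x ∈ Set.Ico (s n) (s (n + 1)),
        α⁻¹ * Metric.infDist (x : ℂ) L ≤ s (n + 1) - s n ∧
          s (n + 1) - s n ≤ α * Metric.infDist (x : ℂ) L) →
      ∀ N₀ : ℝ, 1 ≤ N₀ → Real.sqrt 2 * (1 + α) * N₀ ≤ N →
      ∀ a b : ℝ, a < b →
        (carlesonWindow ((a + b) / 2 - N₀ * (b - a) / 2)
            ((a + b) / 2 + N₀ * (b - a) / 2) ∩ L).Nonempty →
        segMeasure s N (carlesonWindow a b) = ENNReal.ofReal (b - a)) := by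
  refine ⟨fun a b _ => segMeasure_carlesonWindow_le hmono.monotone N a b, ?_⟩
  rintro L - - α hα hd N₀ hN₀ hN a b hab ⟨w, hw, hwL⟩
  refine segMeasure_carlesonWindow_eq hmono.monotone htop hbot
    (lt_of_lt_of_le (by positivity) hN) fun n x hxn hxab => ?_
  have hdist : dist (x : ℂ) w < √2 * (N₀ * (b - a)) := by
    have hx : x ∈ Icc ((a + b) / 2 - N₀ * (b - a) / 2) ((a + b) / 2 + N₀ * (b - a) / 2) :=
      ⟨by nlinarith [hxab.1], by nlinarith [hxab.2]⟩
    convert dist_ofReal_lt_of_mem_carlesonWindow hx hw using 2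
    ring
  calc s (n + 1) - s n ≤ α * Metric.infDist (x : ℂ) L := (hd n x hxn).2
    _ ≤ α * dist (x : ℂ) w := by gcongr; exact Metric.infDist_le_dist_of_mem hwL
    _ < α * (√2 * (N₀ * (b - a))) := by gcongr
    _ ≤ √2 * (1 + α) * N₀ * (b - a) := by
        have : 0 ≤ √2 * N₀ * (b - a) := mul_nonneg (by positivity) (sub_pos.2 hab).le
        linarith
    _ ≤ N * (b - a) := by gcongr

theorem stmt7
    (s : ℤ → ℝ) (hmono : StrictMono s)
    (htop : Tendsto s atTop atTop) (hbot : Tendsto s atBot atBot)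
    (N : ℝ) (hN : 1 ≤ N) :
    (∀ a b : ℝ, a < b →
      segMeasure s N (carlesonWindow a b) ≤ ENNReal.ofReal (b - a))
    ∧
    (∀ L : Set ℂ, L.Nonempty → (∀ w ∈ L, 0 < w.im) →
      ∀ α : ℝ, 1 ≤ α →
      (∀ n : ℤ, ∀ x ∈ Set.Ico (s n) (s (n + 1)),
        α⁻¹ * Metric.infDist (x : ℂ) L ≤ s (n + 1) - s n ∧
          s (n + 1) - s n ≤ α * Metric.infDist (x : ℂ) L) →
      ∀ N₀ : ℝ, 1 ≤ N₀ → Real.sqrt 2 * (1 + α) * N₀ ≤ N →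
      ∀ a b : ℝ, a < b →
        (carlesonWindow ((a + b) / 2 - N₀ * (b - a) / 2)
            ((a + b) / 2 + N₀ * (b - a) / 2) ∩ L).Nonempty →
        segMeasure s N (carlesonWindow a b) = ENNReal.ofReal (b - a)) :=
  stmt7_general s hmono htop hbot N
end

section
/- Let p ∈ [1,∞), ε > 0, and K ≥ 1. Let (J_n)_{n∈ℤ} be pairwise disjoint measurable subsets of ℝ and F = ⋃_{n∈ℤ} J_n. Let f : ℝ → ℂ be infinitely differentiable, let d : ℝ → [0,∞) be measurable, and assume ∫_F |f(x)|^p dx < ∞ and, for every integer k ≥ 1, ∫_F ( |f^{(k)}(x)|·d(x)^k )^p dx ≤ K · (4^k k!/ε^k)^p · ∫_F |f(x)|^p dx. Call an index n bad if there exists an integer m ≥ 1 with ∫_{J_n} ( |f^{(m)}(x)|·d(x)^m )^p dx ≥ K·4^m·(4^m m!/ε^m)^p · ∫_{J_n} |f(x)|^p dx, and good otherwise. Then Σ_{n good} ∫_{J_n} |f(x)|^p dx ≥ (2/3) · ∫_F |f(x)|^p dx. -/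
/-!
Write `g n = ∫_{J n} |f|^p`, so that `∑ g n = I := ∫_F |f|^p`, and `b k n` for the `k`-th weighted
derivative integral over `J n`. With `C_k = 4^k k!/ε^k`, an index is bad through some `k ≥ 1` when
`g n ≤ b k n / (K 4^k C_k^p)`, and by the Bernstein inequality `∑ₙ b k n / (K 4^k C_k^p) ≤ 4^{-k} I`.
Summing over all bad `n` and then over `k` bounds the bad mass by `∑_{k ≥ 1} 4^{-k} I = I / 3`.
-/

open MeasureTheory Set

theorem ENNReal.tsum_subtype_le_of_exists_le {ι : Type*} {s : Set ι} {g : ι → ENNReal}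
    {b : ℕ → ι → ENNReal} (hs : ∀ n ∈ s, ∃ j, g n ≤ b j n) :
    ∑' n : s, g n ≤ ∑' j, ∑' n, b j n :=
  calc ∑' n : s, g n
      ≤ ∑' n : s, ∑' j, b j n := ENNReal.tsum_le_tsum fun n => by
        obtain ⟨j, hj⟩ := hs n n.2
        exact hj.trans (ENNReal.le_tsum j)
    _ ≤ ∑' n, ∑' j, b j n :=
      ENNReal.tsum_comp_le_tsum_of_injective Subtype.val_injective fun n => ∑' j, b j n
    _ = ∑' j, ∑' n, b j n := ENNReal.tsum_comm

theorem tsum_subtype_le_of_exists_le {ι : Type*} {s : Set ι} {g : ι → ℝ} {b : ℕ → ι → ℝ}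
    {r : ℕ → ℝ} (hg0 : ∀ n, 0 ≤ g n) (hg : Summable g) (hb0 : ∀ j n, 0 ≤ b j n)
    (hb : ∀ j, Summable (b j)) (hr : Summable r) (hbr : ∀ j, ∑' n, b j n ≤ r j)
    (hs : ∀ n ∈ s, ∃ j, g n ≤ b j n) :
    ∑' n : s, g n ≤ ∑' j, r j := by
  have hr0 : ∀ j, 0 ≤ r j := fun j => (tsum_nonneg (hb0 j)).trans (hbr j)
  rw [← ENNReal.ofReal_le_ofReal_iff (tsum_nonneg hr0),
    ENNReal.ofReal_tsum_of_nonneg (fun n : s => hg0 n) (hg.subtype s),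
    ENNReal.ofReal_tsum_of_nonneg hr0 hr]
  calc ∑' n : s, ENNReal.ofReal (g n)
      ≤ ∑' j, ∑' n, ENNReal.ofReal (b j n) :=
        ENNReal.tsum_subtype_le_of_exists_le fun n hn => (hs n hn).imp fun _ hj =>
          ENNReal.ofReal_le_ofReal hj
    _ ≤ ∑' j, ENNReal.ofReal (r j) := ENNReal.tsum_le_tsum fun j => by
        rw [← ENNReal.ofReal_tsum_of_nonneg (hb0 j) (hb j)]
        exact ENNReal.ofReal_le_ofReal (hbr j)

theorem hasSum_div_four_pow_succ (I : ℝ) : HasSum (fun j : ℕ => I / 4 ^ (j + 1)) (I / 3) := by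
  have hgeom := (hasSum_geometric_of_lt_one (r := (4 : ℝ)⁻¹) (by norm_num) (by norm_num)).mul_left
    (I / 4)
  have hsum : I / 4 * (1 - (4 : ℝ)⁻¹)⁻¹ = I / 3 := by norm_num; ring
  rw [hsum] at hgeom
  refine hgeom.congr_fun fun j => ?_
  rw [inv_pow, pow_succ]
  ring

theorem two_thirds_mul_le_tsum_good {ι : Type*} {g : ι → ℝ} {I : ℝ} (hg : HasSum g I)
    (hg0 : ∀ n, 0 ≤ g n) {b : ℕ → ι → ℝ} (hb0 : ∀ k n, 0 ≤ b k n)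
    (hb : ∀ k, 1 ≤ k → Summable (b k)) {D : ℕ → ℝ} (hD : ∀ k, 0 < D k)
    (hbD : ∀ k, 1 ≤ k → ∑' n, b k n ≤ D k * (I / 4 ^ k)) :
    2 / 3 * I ≤ ∑' n : {n // ¬ ∃ k, 1 ≤ k ∧ D k * g n ≤ b k n}, g n := by
  set good : Set ι := {n | ¬ ∃ k, 1 ≤ k ∧ D k * g n ≤ b k n}
  have hbad : ∑' n : ↥goodᶜ, g n ≤ I / 3 := by
    rw [← (hasSum_div_four_pow_succ I).tsum_eq]
    refine tsum_subtype_le_of_exists_le hg0 hg.summable (b := fun j n => b (j + 1) n / D (j + 1))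
      (fun j n => div_nonneg (hb0 _ n) (hD _).le) (fun j => (hb _ j.succ_pos).div_const _)
      (hasSum_div_four_pow_succ I).summable (fun j => ?_) (fun n hn => ?_)
    · rw [tsum_div_const, div_le_iff₀' (hD _)]
      exact hbD _ j.succ_pos
    · obtain ⟨k, hk, hgb⟩ := not_not.mp hn
      obtain ⟨j, rfl⟩ := Nat.exists_eq_add_of_le' hk
      exact ⟨j, (le_div_iff₀' (hD _)).mpr hgb⟩
  have hsplit := hg.summable.tsum_subtype_add_tsum_subtype_compl good
  rw [hg.tsum_eq] at hsplit
  change 2 / 3 * I ≤ ∑' n : good, g n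
  linarith

theorem stmt10_general
    (p ε K : ℝ) (hε : 0 < ε) (hK : 1 ≤ K)
    (J : ℤ → Set ℝ) (hJmeas : ∀ n, MeasurableSet (J n))
    (hJdisj : Pairwise (Function.onFun Disjoint J))
    (f : ℝ → ℂ)
    (d : ℝ → ℝ) (hd0 : ∀ x, 0 ≤ d x)
    (hfint : IntegrableOn (fun x : ℝ => ‖f x‖ ^ p) (⋃ n, J n))
    (hbernInt : ∀ k : ℕ, 1 ≤ k →
      IntegrableOn (fun x : ℝ => (‖iteratedDeriv k f x‖ * d x ^ k) ^ p)
        (⋃ n, J n))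
    (hbern : ∀ k : ℕ, 1 ≤ k →
      ∫ x in ⋃ n, J n, (‖iteratedDeriv k f x‖ * d x ^ k) ^ p
        ≤ K * ((4 : ℝ) ^ k * (Nat.factorial k : ℝ) / ε ^ k) ^ p
            * ∫ x in ⋃ n, J n, ‖f x‖ ^ p) :
    (2 / 3) * ∫ x in ⋃ n, J n, ‖f x‖ ^ p
      ≤ ∑' m : {n : ℤ // ¬ ∃ k : ℕ, 1 ≤ k ∧
            K * (4 : ℝ) ^ k * ((4 : ℝ) ^ k * (Nat.factorial k : ℝ) / ε ^ k) ^ p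
                * ∫ x in J n, ‖f x‖ ^ p
              ≤ ∫ x in J n, (‖iteratedDeriv k f x‖ * d x ^ k) ^ p},
          ∫ x in J m.1, ‖f x‖ ^ p := by
  have hC : ∀ k : ℕ, 0 < ((4 : ℝ) ^ k * (Nat.factorial k : ℝ) / ε ^ k) ^ p := fun k =>
    Real.rpow_pos_of_pos (by positivity) p
  refine two_thirds_mul_le_tsum_good (hasSum_integral_iUnion hJmeas hJdisj hfint)
    (fun n => setIntegral_nonneg (hJmeas n) fun x _ => by positivity)
    (fun k n => setIntegral_nonneg (hJmeas n) fun x _ =>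
      Real.rpow_nonneg (mul_nonneg (norm_nonneg _) (pow_nonneg (hd0 x) k)) p)
    (fun k hk => (hasSum_integral_iUnion hJmeas hJdisj (hbernInt k hk)).summable)
    (fun k => by have := hC k; positivity) fun k hk => ?_
  rw [(hasSum_integral_iUnion hJmeas hJdisj (hbernInt k hk)).tsum_eq]
  exact (hbern k hk).trans_eq (by field_simp)

theorem stmt10
    (p ε K : ℝ) (hp : 1 ≤ p) (hε : 0 < ε) (hK : 1 ≤ K)
    (J : ℤ → Set ℝ) (hJmeas : ∀ n, MeasurableSet (J n))
    (hJdisj : Pairwise (Function.onFun Disjoint J))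
    (f : ℝ → ℂ) (hf : ContDiff ℝ (⊤ : ℕ∞) f)
    (d : ℝ → ℝ) (hdmeas : Measurable d) (hd0 : ∀ x, 0 ≤ d x)
    (hfint : IntegrableOn (fun x : ℝ => ‖f x‖ ^ p) (⋃ n, J n))
    (hbernInt : ∀ k : ℕ, 1 ≤ k →
      IntegrableOn (fun x : ℝ => (‖iteratedDeriv k f x‖ * d x ^ k) ^ p)
        (⋃ n, J n))
    (hbern : ∀ k : ℕ, 1 ≤ k →
      ∫ x in ⋃ n, J n, (‖iteratedDeriv k f x‖ * d x ^ k) ^ p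
        ≤ K * ((4 : ℝ) ^ k * (Nat.factorial k : ℝ) / ε ^ k) ^ p
            * ∫ x in ⋃ n, J n, ‖f x‖ ^ p) :
    (2 / 3) * ∫ x in ⋃ n, J n, ‖f x‖ ^ p
      ≤ ∑' m : {n : ℤ // ¬ ∃ k : ℕ, 1 ≤ k ∧
            K * (4 : ℝ) ^ k * ((4 : ℝ) ^ k * (Nat.factorial k : ℝ) / ε ^ k) ^ p
                * ∫ x in J n, ‖f x‖ ^ p
              ≤ ∫ x in J n, (‖iteratedDeriv k f x‖ * d x ^ k) ^ p},
          ∫ x in J m.1, ‖f x‖ ^ p :=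
  stmt10_general p ε K hε hK J hJmeas hJdisj f d hd0 hfint hbernInt hbern
end

section
/- Let p ∈ [1,∞), ε > 0, K ≥ 1, and κ > 1. Let J ⊂ ℝ be a bounded interval with |J| > 0, let x ∈ J, let d > 0 satisfy |J| ≤ (ε/(40·8^{1/p}))·d, and let f be holomorphic on the open disc D(x, 10|J|) ⊂ ℂ. Assume that for every integer k ≥ 0, |f^{(k)}(x)|^p ≤ 2κK · 8^k · (4^k k!/(ε^k d^k))^p · (1/|J|) ∫_J |f(t)|^p dt. Then for every y ∈ ℂ with |x − y| < 10|J|, |f(y)| ≤ (2κK)^{1/p} / (1 − |x−y|/(10|J|)) · sup_{t ∈ J} |f(t)|. -/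
/-! Taking `p`-th roots in the hypothesis and bounding the mean of `|f|^p` over `J` by
`(sup_J |f|)^p` turns it into a Cauchy-type estimate `|f^{(k)}(x)| ≤ C k! / ρ^k` with
`C = (2κK)^{1/p} sup_J |f|` and radius `ρ = εd / (4·8^{1/p}) ≥ 10|J|`. Summing the Taylor series
of `f` at `x`, which converges on the disc of holomorphy, against the geometric series
`∑ C (|x - y| / 10|J|)^k` gives the bound. -/

open MeasureTheory Set

theorem norm_le_div_one_sub_of_norm_iteratedDeriv_le {f : ℂ → ℂ} {c y : ℂ} {R ρ C : ℝ}
    (hf : DifferentiableOn ℂ f (Metric.ball c R)) (hy : ‖y - c‖ < R) (hRρ : R ≤ ρ)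
    (hbound : ∀ k : ℕ, ‖iteratedDeriv k f c‖ ≤ C * k.factorial / ρ ^ k) :
    ‖f y‖ ≤ C / (1 - ‖y - c‖ / R) := by
  have hR : 0 < R := (norm_nonneg _).trans_lt hy
  have hρ : 0 < ρ := hR.trans_le hRρ
  have hC : 0 ≤ C := by simpa using (norm_nonneg _).trans (hbound 0)
  set r := ‖y - c‖ / R
  have hr : r < 1 := (div_lt_one hR).mpr hy
  have htaylor := Complex.hasSum_taylorSeries_on_ball hf (mem_ball_iff_norm.mpr hy)
  have hgeom := (hasSum_geometric_of_lt_one (by positivity) hr).mul_left C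
  rw [div_eq_mul_inv]
  refine htaylor.norm_le_of_bounded hgeom fun k => ?_
  have hfac : (0 : ℝ) < k.factorial := by positivity
  calc ‖(k.factorial : ℂ)⁻¹ • (y - c) ^ k • iteratedDeriv k f c‖
      = ‖y - c‖ ^ k * ‖iteratedDeriv k f c‖ / k.factorial := by
        rw [norm_smul, norm_smul, norm_inv, norm_pow, Complex.norm_natCast]
        field_simp
    _ ≤ ‖y - c‖ ^ k * (C * k.factorial / ρ ^ k) / k.factorial := by gcongr; exact hbound k
    _ = C * (‖y - c‖ / ρ) ^ k := by rw [div_pow]; field_simp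
    _ ≤ C * r ^ k := by gcongr; exact div_le_div_of_nonneg_left (norm_nonneg _) hR hRρ

theorem inv_sub_mul_integral_Icc_norm_rpow_le {E : Type*} [NormedAddCommGroup E] {g : ℝ → E}
    {A B p : ℝ} (hAB : A ≤ B) (hp : 0 ≤ p) (hg : ContinuousOn g (Icc A B)) :
    (B - A)⁻¹ * ∫ t in Icc A B, ‖g t‖ ^ p ≤ sSup ((fun t => ‖g t‖) '' Icc A B) ^ p := by
  set M := sSup ((fun t => ‖g t‖) '' Icc A B)
  have hle : ∀ t ∈ Icc A B, ‖g t‖ ≤ M := fun t ht =>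
    le_csSup (isCompact_Icc.image_of_continuousOn hg.norm).bddAbove ⟨t, ht, rfl⟩
  have hM : 0 ≤ M := (norm_nonneg _).trans (hle A (left_mem_Icc.mpr hAB))
  refine inv_mul_le_of_le_mul₀ (sub_nonneg.mpr hAB) (by positivity) ?_
  calc ∫ t in Icc A B, ‖g t‖ ^ p
      ≤ ∫ _ in Icc A B, M ^ p :=
        setIntegral_mono_on ((hg.norm.rpow_const fun _ _ => Or.inr hp).integrableOn_Icc)
          (integrableOn_const measure_Icc_lt_top.ne) measurableSet_Icc
          fun t ht => Real.rpow_le_rpow (norm_nonneg _) (hle t ht) hp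
    _ = (B - A) * M ^ p := by
        rw [setIntegral_const, Real.volume_real_Icc_of_le hAB, smul_eq_mul]

theorem le_rpow_one_div_mul_of_rpow_le {a b c p : ℝ} (hp : 0 < p) (ha : 0 ≤ a) (hb : 0 ≤ b)
    (hc : 0 ≤ c) (h : a ^ p ≤ b * c ^ p) : a ≤ b ^ (1 / p) * c := by
  rwa [← Real.rpow_le_rpow_iff ha (by positivity) hp, Real.mul_rpow (by positivity) hc,
    ← Real.rpow_mul hb, one_div_mul_cancel hp.ne', Real.rpow_one]

theorem le_mul_factorial_div_pow_of_rpow_le {a b p ε d C M : ℝ} {k : ℕ} (hp : 0 < p)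
    (hb : 0 < b) (hε : 0 < ε) (hd : 0 < d) (ha : 0 ≤ a) (hC : 0 ≤ C) (hM : 0 ≤ M)
    (h : a ^ p ≤ C * b ^ k * ((4 : ℝ) ^ k * k.factorial / (ε ^ k * d ^ k)) ^ p * M ^ p) :
    a ≤ C ^ (1 / p) * M * k.factorial / (ε * d / (4 * b ^ (1 / p))) ^ k := by
  have hb' : 0 < b ^ (1 / p) := by positivity
  have hroot := le_rpow_one_div_mul_of_rpow_le hp ha (by positivity : 0 ≤ C * b ^ k)
    (by positivity : 0 ≤ (4 : ℝ) ^ k * k.factorial / (ε ^ k * d ^ k) * M)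
    (h.trans_eq (by rw [Real.mul_rpow (by positivity) hM]; ring))
  rw [Real.mul_rpow hC (by positivity), ← Real.rpow_natCast_mul hb.le, mul_comm (k : ℝ),
    Real.rpow_mul_natCast hb.le] at hroot
  refine hroot.trans_eq ?_
  rw [div_pow, mul_pow, mul_pow]
  field_simp

theorem stmt12
    (p ε K κ : ℝ) (hp : 1 ≤ p) (hε : 0 < ε) (hK : 1 ≤ K) (hκ : 1 < κ)
    (A B : ℝ) (hAB : A < B)
    (x : ℝ) (hx : x ∈ Set.Icc A B)
    (d : ℝ) (hd : 0 < d)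
    (hJd : B - A ≤ ε / (40 * (8 : ℝ) ^ (1 / p)) * d)
    (f : ℂ → ℂ)
    (hf : DifferentiableOn ℂ f (Metric.ball (x : ℂ) (10 * (B - A))))
    (hgood : ∀ k : ℕ,
      ‖iteratedDeriv k f (x : ℂ)‖ ^ p
        ≤ 2 * κ * K * (8 : ℝ) ^ k
            * ((4 : ℝ) ^ k * (Nat.factorial k : ℝ) / (ε ^ k * d ^ k)) ^ p
            * ((B - A)⁻¹ * ∫ t in Set.Icc A B, ‖f t‖ ^ p)) :
    ∀ y : ℂ, ‖(x : ℂ) - y‖ < 10 * (B - A) →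
      ‖f y‖
        ≤ (2 * κ * K) ^ (1 / p) / (1 - ‖(x : ℂ) - y‖ / (10 * (B - A)))
            * sSup ((fun t : ℝ => ‖f t‖) '' Set.Icc A B) := by
  intro y hy
  have hp0 : 0 < p := by linarith
  set s := (8 : ℝ) ^ (1 / p)
  set M := sSup ((fun t : ℝ => ‖f t‖) '' Set.Icc A B)
  have hM : 0 ≤ M := Real.sSup_nonneg <| by rintro _ ⟨t, -, rfl⟩; exact norm_nonneg _
  have hJ : MapsTo (fun t : ℝ => (t : ℂ)) (Icc A B) (Metric.ball (x : ℂ) (10 * (B - A))) :=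
    fun t ht => by
      rw [Metric.mem_ball, Complex.isometry_ofReal.dist_eq]
      linarith [Real.dist_le_of_mem_Icc ht hx]
  have hmean : (B - A)⁻¹ * ∫ t in Icc A B, ‖f t‖ ^ p ≤ M ^ p :=
    inv_sub_mul_integral_Icc_norm_rpow_le hAB.le hp0.le
      (hf.continuousOn.comp Complex.continuous_ofReal.continuousOn hJ)
  have hderiv (k : ℕ) :
      ‖iteratedDeriv k f x‖ ≤ (2 * κ * K) ^ (1 / p) * M * k.factorial / (ε * d / (4 * s)) ^ k :=
    le_mul_factorial_div_pow_of_rpow_le hp0 (by norm_num) hε hd (norm_nonneg _) (by positivity) hM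
      ((hgood k).trans (mul_le_mul_of_nonneg_left hmean (by positivity)))
  have hradius : 10 * (B - A) ≤ ε * d / (4 * s) := by
    rw [le_div_iff₀ (by positivity)]
    rw [div_mul_eq_mul_div, le_div_iff₀ (by positivity)] at hJd
    linarith
  rw [norm_sub_rev] at hy ⊢
  rw [div_mul_eq_mul_div]
  exact norm_le_div_one_sub_of_norm_iteratedDeriv_le hf hy hradius hderiv
end

section
/- Let p ∈ [1,∞), ε ∈ (0,1), K ≥ 1, and κ > 1. Let J ⊂ ℝ be a compact interval with |J| > 0, let d : J → (0,∞) be continuous with |J| ≤ (ε/(40·8^{1/p}))·d(x) for every x ∈ J, and let f be holomorphic on the open set {z ∈ ℂ : dist(z, J) < 10|J|}. Assume 0 < ∫_J |f(x)|^p dx < ∞ and, for every integer m ≥ 1, ∫_J ( |f^{(m)}(x)|·d(x)^m )^p dx ≤ K·4^m·(4^m m!/ε^m)^p · ∫_J |f(x)|^p dx. Then sup { |f(z)| : z ∈ ℂ, dist(z, J) ≤ 4|J| } ≤ 2·(2κK)^{1/p} · sup_{x ∈ J} |f(x)|. -/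
open MeasureTheory Set

/-
Markov's inequality turns the integral Bernstein bounds into the following: the set of points of
`J` at which `‖f⁽ᵐ⁾‖ dᵐ` exceeds `(2κK 8ᵐ)^(1/p) (4ᵐ m!/εᵐ) max_J ‖f‖` has measure at most
`|J| / (2κ 2ᵐ)`. Summed over `m ≥ 1` these measures stay below `|J|`, so some `x₀ ∈ J` obeys all
the bounds at once. At such a point the Taylor coefficients of `f` decay like
`(4 · 8^(1/p) / (ε d x₀))ᵐ`, so the Taylor series at `x₀` is dominated by a geometric series of
ratio `1/2` on the disc of radius `ε d x₀ / (8 · 8^(1/p)) ≥ 5|J|`, which contains the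
`4|J|`-neighbourhood of `J`.
-/

theorem exists_mem_forall_notMem_of_tsum_measure_lt {α ι : Type*} [MeasurableSpace α] [Countable ι]
    {μ : Measure α} {s : Set α} {E : ι → Set α} (h : ∑' i, μ (E i) < μ s) :
    ∃ x ∈ s, ∀ i, x ∉ E i := by
  by_contra! hcover
  have : s ⊆ ⋃ i, E i := fun x hx => mem_iUnion.2 (hcover x hx)
  exact (measure_mono this |>.trans (measure_iUnion_le E)).not_gt h

theorem exists_mem_forall_le_of_setIntegral_le {α ι : Type*} [MeasurableSpace α] [Countable ι]
    {μ : Measure α} {s : Set α} (hs : MeasurableSet s) (hμs : μ s ≠ ⊤) {g : ι → α → ℝ}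
    {T δ : ι → ℝ} {a : ℝ} (hT : ∀ i, 0 < T i) (hg0 : ∀ i, ∀ x ∈ s, 0 ≤ g i x)
    (hint : ∀ i, IntegrableOn (g i) s μ) (hgT : ∀ i, ∫ x in s, g i x ∂μ ≤ T i * δ i)
    (hδ : HasSum δ a) (ha : a < μ.real s) : ∃ x ∈ s, ∀ i, g i x ≤ T i := by
  have : IsFiniteMeasure (μ.restrict s) := isFiniteMeasure_restrict.2 hμs
  have hmarkov (i : ι) : (μ.restrict s).real {x | T i ≤ g i x} ≤ δ i :=
    le_of_mul_le_mul_left ((mul_meas_ge_le_integral_of_nonneg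
      (ae_restrict_of_forall_mem hs (hg0 i)) (hint i) (T i)).trans (hgT i)) (hT i)
  have hδ0 (i : ι) : 0 ≤ δ i := measureReal_nonneg.trans (hmarkov i)
  have hE (i : ι) : μ ({x | T i ≤ g i x} ∩ s) ≤ ENNReal.ofReal (δ i) := by
    grw [Measure.le_restrict_apply, ← ofReal_measureReal, hmarkov i]
  obtain ⟨x, hxs, hx⟩ := exists_mem_forall_notMem_of_tsum_measure_lt <|
    calc ∑' i, μ ({x | T i ≤ g i x} ∩ s) ≤ ∑' i, ENNReal.ofReal (δ i) := ENNReal.tsum_le_tsum hE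
      _ = ENNReal.ofReal a := by rw [← ENNReal.ofReal_tsum_of_nonneg hδ0 hδ.summable, hδ.tsum_eq]
      _ < ENNReal.ofReal (μ.real s) :=
          ENNReal.ofReal_lt_ofReal_iff'.2 ⟨ha, (hδ.nonneg hδ0).trans_lt ha⟩
      _ = μ s := ofReal_measureReal hμs
  exact ⟨x, hxs, fun i => (not_le.1 fun hle => hx i ⟨hle, hxs⟩).le⟩

theorem exists_mem_forall_le_of_setIntegral_rpow_le {α : Type*} [MeasurableSpace α]
    {μ : Measure α} {s : Set α} (hs : MeasurableSet s) (hμs : μ s ≠ ⊤) (hμs0 : 0 < μ.real s)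
    {p K κ M : ℝ} (hp : 0 < p) (hK : 0 < K) (hκ : 1 < κ) (hM : 0 < M) {F : ℕ → α → ℝ}
    {β : ℕ → ℝ} (hβ : ∀ m, 0 < β m) (hF0 : ∀ m, ∀ x ∈ s, 0 ≤ F m x)
    (hFint : ∀ m, 1 ≤ m → IntegrableOn (fun x => F m x ^ p) s μ)
    (hF : ∀ m, 1 ≤ m → ∫ x in s, F m x ^ p ∂μ ≤ K * 4 ^ m * β m ^ p * (M ^ p * μ.real s)) :
    ∃ x ∈ s, ∀ m, 1 ≤ m → F m x ≤ (2 * κ * K) ^ (1 / p) * ((8 : ℝ) ^ (1 / p)) ^ m * β m * M := by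
  set L : ℕ → ℝ := fun m => (2 * κ * K) ^ (1 / p) * ((8 : ℝ) ^ (1 / p)) ^ m * β m * M
  have hL (m : ℕ) : 0 < L m := by have := hβ m; positivity
  have hLp (m : ℕ) : L m ^ p = 2 * κ * K * 8 ^ m * β m ^ p * M ^ p := by
    have := hβ m
    rw [Real.mul_rpow (by positivity) hM.le, Real.mul_rpow (by positivity) this.le,
      Real.mul_rpow (by positivity) (by positivity), Real.rpow_pow_comm (by norm_num),
      ← Real.rpow_mul (by positivity), ← Real.rpow_mul (by positivity),
      one_div_mul_cancel hp.ne', Real.rpow_one, Real.rpow_one]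
  obtain ⟨x, hx, hle⟩ := exists_mem_forall_le_of_setIntegral_le hs hμs
    (g := fun i x => F (i + 1) x ^ p) (T := fun i => L (i + 1) ^ p)
    (fun i => by have := hL (i + 1); positivity)
    (fun i x hx => Real.rpow_nonneg (hF0 _ x hx) p) (fun i => hFint _ i.succ_pos)
    (fun i => (hF _ i.succ_pos).trans_eq <| by
      have h8 : (8 : ℝ) ^ (i + 1) = 4 ^ (i + 1) * 2 * 2 ^ i := by
        rw [mul_assoc, ← pow_succ', ← mul_pow]; norm_num
      rw [hLp, h8]
      field_simp)
    (hasSum_geometric_two' (μ.real s / (2 * κ))) (div_lt_self hμs0 (by linarith))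
  refine ⟨x, hx, fun m hm => ?_⟩
  obtain ⟨i, rfl⟩ := Nat.exists_eq_add_of_le' hm
  exact (Real.rpow_le_rpow_iff (hF0 _ x hx) (hL _).le hp).1 (hle i)

theorem setIntegral_norm_rpow_le {α E : Type*} [MeasurableSpace α] [NormedAddCommGroup E]
    {μ : Measure α} {s : Set α} {g : α → E} {p M : ℝ} (hμs : μ s ≠ ⊤) (hp : 0 ≤ p)
    (hg : ∀ x ∈ s, ‖g x‖ ≤ M) : ∫ x in s, ‖g x‖ ^ p ∂μ ≤ M ^ p * μ.real s :=
  (Real.le_norm_self _).trans <| norm_setIntegral_le_of_norm_le_const hμs.lt_top fun x hx => by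
    rw [Real.norm_of_nonneg (by positivity)]
    exact Real.rpow_le_rpow (norm_nonneg _) (hg x hx) hp

theorem Complex.norm_le_div_of_norm_iteratedDeriv_mul_pow_le {E : Type*} [NormedAddCommGroup E]
    [NormedSpace ℂ E] [CompleteSpace E] {f : ℂ → E} {c z : ℂ} {R ρ C : ℝ}
    (hf : DifferentiableOn ℂ f (Metric.ball c R)) (hz : z ∈ Metric.ball c R)
    (hder : ∀ m, ‖iteratedDeriv m f c‖ * ρ ^ m ≤ C * m.factorial) (hzρ : dist z c < ρ) :
    ‖f z‖ ≤ C / (1 - dist z c / ρ) := by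
  have hρ : 0 < ρ := dist_nonneg.trans_lt hzρ
  have hr : dist z c / ρ < 1 := (div_lt_one hρ).2 hzρ
  refine (hasSum_taylorSeries_on_ball hf hz).norm_le_of_bounded
    ((hasSum_geometric_of_lt_one (by positivity) hr).mul_left C) fun m => ?_
  have hm : (0 : ℝ) < m.factorial := mod_cast m.factorial_pos
  rw [norm_smul, norm_smul, norm_inv, Complex.norm_natCast, norm_pow, ← dist_eq_norm,
    inv_mul_le_iff₀ hm, div_pow, mul_div_assoc', mul_div_assoc', le_div_iff₀ (by positivity)]
  calc dist z c ^ m * ‖iteratedDeriv m f c‖ * ρ ^ m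
      = dist z c ^ m * (‖iteratedDeriv m f c‖ * ρ ^ m) := by ring
    _ ≤ dist z c ^ m * (C * m.factorial) := mul_le_mul_of_nonneg_left (hder m) (by positivity)
    _ = m.factorial * (C * dist z c ^ m) := by ring

theorem Complex.norm_le_two_mul_of_norm_iteratedDeriv_mul_pow_le {E : Type*}
    [NormedAddCommGroup E] [NormedSpace ℂ E] [CompleteSpace E] {f : ℂ → E} {c z : ℂ}
    {R ρ C : ℝ} (hf : DifferentiableOn ℂ f (Metric.ball c R)) (hz : z ∈ Metric.ball c R)
    (hder : ∀ m, ‖iteratedDeriv m f c‖ * ρ ^ m ≤ C * m.factorial) (hρ : 0 < ρ)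
    (hzρ : 2 * dist z c ≤ ρ) : ‖f z‖ ≤ 2 * C := by
  have hr : dist z c / ρ ≤ 1 / 2 := by rw [div_le_iff₀ hρ]; linarith
  have hC : 0 ≤ C := by
    have h0 := hder 0
    rw [pow_zero, mul_one, Nat.factorial_zero, Nat.cast_one, mul_one] at h0
    exact (norm_nonneg _).trans h0
  calc ‖f z‖ ≤ C / (1 - dist z c / ρ) :=
        norm_le_div_of_norm_iteratedDeriv_mul_pow_le hf hz hder (by linarith)
    _ ≤ 2 * C := by rw [div_le_iff₀ (by linarith)]; nlinarith

theorem Complex.dist_ofReal_le_infDist_add {A B : ℝ} (hAB : A ≤ B) {x : ℝ} (hx : x ∈ Icc A B)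
    (z : ℂ) : dist z x ≤ Metric.infDist z ((fun t : ℝ => (t : ℂ)) '' Icc A B) + (B - A) := by
  have hS : IsCompact ((fun t : ℝ => (t : ℂ)) '' Icc A B) :=
    isCompact_Icc.image Complex.continuous_ofReal
  have := Metric.dist_le_infDist_add_diam hS.isBounded (mem_image_of_mem _ hx) (x := z)
  rwa [Complex.isometry_ofReal.diam_image, Real.diam_Icc hAB] at this

theorem exists_mem_forall_norm_iteratedDeriv_mul_pow_le {E : Type*} [NormedAddCommGroup E]
    [NormedSpace ℂ E] {f : ℂ → E} {d : ℝ → ℝ} {s : Set ℝ} (hs : MeasurableSet s)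
    (hμs : volume s ≠ ⊤) (hμs0 : 0 < volume.real s) {p ε K κ M : ℝ} (hp : 0 < p) (hε : 0 < ε)
    (hK : 1 ≤ K) (hκ : 1 < κ) (hfM : ∀ x ∈ s, ‖f x‖ ≤ M) (hfpos : 0 < ∫ x in s, ‖f x‖ ^ p)
    (hd0 : ∀ x ∈ s, 0 < d x)
    (hint : ∀ m : ℕ, 1 ≤ m →
      IntegrableOn (fun x : ℝ => (‖iteratedDeriv m f (x : ℂ)‖ * d x ^ m) ^ p) s)
    (hbern : ∀ m : ℕ, 1 ≤ m →
      ∫ x in s, (‖iteratedDeriv m f (x : ℂ)‖ * d x ^ m) ^ p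
        ≤ K * 4 ^ m * (4 ^ m * m.factorial / ε ^ m) ^ p * ∫ x in s, ‖f x‖ ^ p) :
    ∃ x ∈ s, ∀ m, ‖iteratedDeriv m f x‖ * (ε * d x / (4 * (8 : ℝ) ^ (1 / p))) ^ m
      ≤ (2 * κ * K) ^ (1 / p) * M * m.factorial := by
  have hI := setIntegral_norm_rpow_le hμs hp.le hfM
  have hM : 0 < M := by
    obtain ⟨x₁, hx₁⟩ := nonempty_of_measure_ne_zero ((measureReal_ne_zero_iff hμs).1 hμs0.ne')
    refine ((norm_nonneg _).trans (hfM x₁ hx₁)).lt_of_ne fun h => ?_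
    rw [← h, Real.zero_rpow hp.ne', zero_mul] at hI
    linarith
  obtain ⟨x, hx, hgood⟩ := exists_mem_forall_le_of_setIntegral_rpow_le hs hμs hμs0 hp
    (by linarith) hκ hM (fun m => by positivity)
    (fun m x hx => by have := hd0 x hx; positivity) hint
    fun m hm => (hbern m hm).trans (mul_le_mul_of_nonneg_left hI (by positivity))
  refine ⟨x, hx, fun m => ?_⟩
  rcases Nat.eq_zero_or_pos m with rfl | hm
  · simpa using (hfM x hx).trans
      (le_mul_of_one_le_left hM.le (Real.one_le_rpow (by nlinarith) (by positivity)))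
  have h8 : 0 < (8 : ℝ) ^ (1 / p) := by positivity
  calc ‖iteratedDeriv m f x‖ * (ε * d x / (4 * 8 ^ (1 / p))) ^ m
      = ‖iteratedDeriv m f x‖ * d x ^ m * (ε / (4 * 8 ^ (1 / p))) ^ m := by ring
    _ ≤ (2 * κ * K) ^ (1 / p) * (8 ^ (1 / p)) ^ m * (4 ^ m * m.factorial / ε ^ m) * M
          * (ε / (4 * 8 ^ (1 / p))) ^ m :=
        mul_le_mul_of_nonneg_right (hgood m hm) (by positivity)
    _ = (2 * κ * K) ^ (1 / p) * M * m.factorial := by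
        rw [div_pow, mul_pow]
        field_simp

theorem stmt13_general
    (p ε K κ : ℝ) (hp : 1 ≤ p) (hε : ε ∈ Set.Ioo (0 : ℝ) 1) (hK : 1 ≤ K) (hκ : 1 < κ)
    (A B : ℝ) (hAB : A < B)
    (d : ℝ → ℝ)
    (hd0 : ∀ x ∈ Set.Icc A B, 0 < d x)
    (hsmall : ∀ x ∈ Set.Icc A B, B - A ≤ ε / (40 * (8 : ℝ) ^ (1 / p)) * d x)
    (f : ℂ → ℂ)
    (hf : DifferentiableOn ℂ f
      {z : ℂ | Metric.infDist z ((fun t : ℝ => (t : ℂ)) '' Set.Icc A B) < 10 * (B - A)})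
    (hfpos : 0 < ∫ x in Set.Icc A B, ‖f x‖ ^ p)
    (hbernInt : ∀ m : ℕ, 1 ≤ m →
      IntegrableOn (fun x : ℝ => (‖iteratedDeriv m f (x : ℂ)‖ * d x ^ m) ^ p)
        (Set.Icc A B))
    (hbern : ∀ m : ℕ, 1 ≤ m →
      ∫ x in Set.Icc A B, (‖iteratedDeriv m f (x : ℂ)‖ * d x ^ m) ^ p
        ≤ K * (4 : ℝ) ^ m * ((4 : ℝ) ^ m * (Nat.factorial m : ℝ) / ε ^ m) ^ p
            * ∫ x in Set.Icc A B, ‖f x‖ ^ p) :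
    sSup ((fun z : ℂ => ‖f z‖) ''
        {z : ℂ | Metric.infDist z ((fun t : ℝ => (t : ℂ)) '' Set.Icc A B) ≤ 4 * (B - A)})
      ≤ 2 * (2 * κ * K) ^ (1 / p)
          * sSup ((fun t : ℝ => ‖f t‖) '' Set.Icc A B) := by
  obtain ⟨hε0, -⟩ := hε
  set S := (fun t : ℝ => (t : ℂ)) '' Icc A B
  set M := sSup ((fun t : ℝ => ‖f t‖) '' Icc A B)
  have hfJ : ContinuousOn (fun t : ℝ => f t) (Icc A B) := by
    refine hf.continuousOn.comp Complex.continuous_ofReal.continuousOn fun x hx => ?_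
    change Metric.infDist (x : ℂ) S < _
    rw [Metric.infDist_zero_of_mem (mem_image_of_mem _ hx)]
    linarith
  have hfM (x : ℝ) (hx : x ∈ Icc A B) : ‖f x‖ ≤ M :=
    le_csSup (isCompact_Icc.image_of_continuousOn hfJ.norm).bddAbove ⟨x, hx, rfl⟩
  obtain ⟨x₀, hx₀, hder⟩ := exists_mem_forall_norm_iteratedDeriv_mul_pow_le measurableSet_Icc
    measure_Icc_lt_top.ne (by rw [Real.volume_real_Icc_of_le hAB.le]; linarith) (by linarith)
    hε0 hK hκ hfM hfpos hd0 hbernInt hbern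
  have hM0 : 0 ≤ M := (norm_nonneg _).trans (hfM x₀ hx₀)
  refine Real.sSup_le ?_ (by positivity)
  rintro _ ⟨z, hz, rfl⟩
  have hzx₀ : dist z x₀ ≤ 5 * (B - A) := by
    linarith [Complex.dist_ofReal_le_infDist_add hAB.le hx₀ z, show Metric.infDist z S ≤ _ from hz]
  have hball : Metric.ball (x₀ : ℂ) (6 * (B - A)) ⊆ {z : ℂ | Metric.infDist z S < 10 * (B - A)} :=
    fun w hw => (Metric.infDist_le_dist_of_mem (mem_image_of_mem _ hx₀)).trans_lt
      ((Metric.mem_ball.1 hw).trans (by linarith))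
  calc ‖f z‖ ≤ 2 * ((2 * κ * K) ^ (1 / p) * M) :=
        Complex.norm_le_two_mul_of_norm_iteratedDeriv_mul_pow_le (hf.mono hball)
          (Metric.mem_ball.2 (by linarith)) hder (by have := hd0 x₀ hx₀; positivity)
          (by linarith [hsmall x₀ hx₀, show ε * d x₀ / (4 * 8 ^ (1 / p))
            = 10 * (ε / (40 * 8 ^ (1 / p)) * d x₀) by ring])
    _ = _ := by ring

theorem stmt13
    (p ε K κ : ℝ) (hp : 1 ≤ p) (hε : ε ∈ Set.Ioo (0 : ℝ) 1) (hK : 1 ≤ K) (hκ : 1 < κ)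
    (A B : ℝ) (hAB : A < B)
    (d : ℝ → ℝ) (hdcont : ContinuousOn d (Set.Icc A B))
    (hd0 : ∀ x ∈ Set.Icc A B, 0 < d x)
    (hsmall : ∀ x ∈ Set.Icc A B, B - A ≤ ε / (40 * (8 : ℝ) ^ (1 / p)) * d x)
    (f : ℂ → ℂ)
    (hf : DifferentiableOn ℂ f
      {z : ℂ | Metric.infDist z ((fun t : ℝ => (t : ℂ)) '' Set.Icc A B) < 10 * (B - A)})
    (hfint : IntegrableOn (fun x : ℝ => ‖f x‖ ^ p) (Set.Icc A B))
    (hfpos : 0 < ∫ x in Set.Icc A B, ‖f x‖ ^ p)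
    (hbernInt : ∀ m : ℕ, 1 ≤ m →
      IntegrableOn (fun x : ℝ => (‖iteratedDeriv m f (x : ℂ)‖ * d x ^ m) ^ p)
        (Set.Icc A B))
    (hbern : ∀ m : ℕ, 1 ≤ m →
      ∫ x in Set.Icc A B, (‖iteratedDeriv m f (x : ℂ)‖ * d x ^ m) ^ p
        ≤ K * (4 : ℝ) ^ m * ((4 : ℝ) ^ m * (Nat.factorial m : ℝ) / ε ^ m) ^ p
            * ∫ x in Set.Icc A B, ‖f x‖ ^ p) :
    sSup ((fun z : ℂ => ‖f z‖) ''
        {z : ℂ | Metric.infDist z ((fun t : ℝ => (t : ℂ)) '' Set.Icc A B) ≤ 4 * (B - A)})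
      ≤ 2 * (2 * κ * K) ^ (1 / p)
          * sSup ((fun t : ℝ => ‖f t‖) '' Set.Icc A B) :=
  stmt13_general p ε K κ hp hε hK hκ A B hAB d hd0 hsmall f hf hfpos hbernInt hbern
end

section
/- Let p ∈ (1,∞) and α ≥ 1. There exists a constant C > 0, depending only on p and α, with the following property: for every integer a ≥ 1, every δ > 0, every bounded interval I ⊂ ℝ of length L > 0 and center t₀, every measurable set Γ ⊂ ℝ such that |Γ ∩ (I^{ℓ+1} ∖ I^{ℓ})| ≤ δL for every integer ℓ with 0 ≤ ℓ ≤ a−1 (where I^0 = ∅), every x₀ ∈ ℝ with |x₀ − t₀| ≤ αL, and every y with L/α ≤ y ≤ αL, one has ∫_{Γ ∩ I^a} y^{p−1} / ((t−x₀)² + y²)^{p/2} dt ≤ C·δ. -/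
/-!
On the layer `I^{ℓ+1} ∖ I^ℓ` the point `x₀ + iy` lies at distance at least `(ℓ + 1) L / (8α²)`
from `t`: for small `ℓ` because `y ≥ L / α`, for large `ℓ` because `x₀` is within `αL` of the
center while `t` is at distance `ℓL / 2` from it. Hence the kernel is `O(1 / ((ℓ + 1)^p L))` on
that layer, which meets `Γ` in measure at most `δL`; summing over the layers gives
`O(δ ∑ (ℓ + 1)^{-p})`, and the series converges because `p > 1`.
-/

open MeasureTheory Set Function

/-- `amplify t₀ L b` is the interval `I^b` of the paper, for `I` of center `t₀` and length `L`. -/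
def amplify (t₀ L b : ℝ) : Set ℝ := Icc (t₀ - b * L / 2) (t₀ + b * L / 2)

def layer (t₀ L : ℝ) (ℓ : ℕ) : Set ℝ :=
  amplify t₀ L (ℓ + 1) \ if ℓ = 0 then ∅ else amplify t₀ L ℓ

noncomputable def poissonPowKernel (p x₀ y t : ℝ) : ℝ :=
  y ^ (p - 1) / ((t - x₀) ^ 2 + y ^ 2) ^ (p / 2)

section Layers

variable {t₀ L : ℝ}

lemma amplify_subset_amplify (hL : 0 ≤ L) {b c : ℝ} (hbc : b ≤ c) :
    amplify t₀ L b ⊆ amplify t₀ L c := by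
  have : b * L ≤ c * L := mul_le_mul_of_nonneg_right hbc hL
  exact Icc_subset_Icc (by linarith) (by linarith)

lemma measurableSet_layer (ℓ : ℕ) : MeasurableSet (layer t₀ L ℓ) := by
  unfold layer amplify
  split_ifs <;> measurability

lemma layer_subset_amplify (ℓ : ℕ) : layer t₀ L ℓ ⊆ amplify t₀ L (ℓ + 1) := sdiff_subset

lemma layer_of_ne_zero {ℓ : ℕ} (hℓ : ℓ ≠ 0) :
    layer t₀ L ℓ = amplify t₀ L (ℓ + 1) \ amplify t₀ L ℓ := by
  rw [layer, if_neg hℓ]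

lemma biUnion_range_layer (hL : 0 ≤ L) {n : ℕ} (hn : 1 ≤ n) :
    ⋃ ℓ ∈ Finset.range n, layer t₀ L ℓ = amplify t₀ L n := by
  induction n, hn using Nat.le_induction with
  | base => simp [layer]
  | succ n hn ih =>
    rw [Finset.range_add_one, Finset.set_biUnion_insert, ih, layer_of_ne_zero (by omega),
      Nat.cast_add_one]
    exact sdiff_union_of_subset (amplify_subset_amplify hL (by linarith))

lemma pairwise_disjoint_layer (hL : 0 ≤ L) : Pairwise (Disjoint on layer t₀ L) := by
  refine (pairwise_disjoint_on _).mpr fun i j hij => ?_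
  rw [layer_of_ne_zero (ℓ := j) (by omega)]
  refine Disjoint.mono_left ((layer_subset_amplify i).trans ?_) disjoint_sdiff_right
  exact amplify_subset_amplify hL (by exact_mod_cast hij)

lemma le_abs_sub_of_mem_layer {ℓ : ℕ} {t : ℝ} (ht : t ∈ layer t₀ L ℓ) :
    ℓ * L / 2 ≤ |t - t₀| := by
  rcases eq_or_ne ℓ 0 with rfl | hℓ
  · simp
  rw [layer_of_ne_zero hℓ] at ht
  have hout : ¬ (t₀ - ℓ * L / 2 ≤ t ∧ t ≤ t₀ + ℓ * L / 2) := ht.2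
  rw [le_abs']
  by_contra! h
  exact hout ⟨by linarith, by linarith⟩

end Layers

lemma sq_le_sq_add_sq_of_far {α L m t t₀ x₀ y : ℝ} (hα : 1 ≤ α) (hL : 0 < L) (hm : 0 ≤ m)
    (ht : (m - 1) * L / 2 ≤ |t - t₀|) (hx₀ : |x₀ - t₀| ≤ α * L) (hy : L / α ≤ y) :
    (m * L / (8 * α ^ 2)) ^ 2 ≤ (t - x₀) ^ 2 + y ^ 2 := by
  have hα₀ : 0 < α := by linarith
  have hαL : L ≤ α * L := le_mul_of_one_le_left hL.le hα
  have hr : m * L / (8 * α ^ 2) ≤ m * L / 8 := by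
    gcongr
    nlinarith
  rcases le_or_gt m (8 * α) with hm8 | hm8
  · have hry : m * L / (8 * α ^ 2) ≤ y := calc
      m * L / (8 * α ^ 2) ≤ 8 * α * L / (8 * α ^ 2) := by gcongr
      _ = L / α := by field_simp
      _ ≤ y := hy
    nlinarith [pow_le_pow_left₀ (by positivity) hry 2]
  · have hmL : 8 * (α * L) < m * L := by nlinarith
    have hfar : m * L / 8 ≤ |t - x₀| := by
      have := abs_sub_abs_le_abs_sub (t - t₀) (x₀ - t₀)
      rw [sub_sub_sub_cancel_right] at this
      linarith
    nlinarith [pow_le_pow_left₀ (by positivity) (hr.trans hfar) 2, sq_abs (t - x₀)]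

lemma continuous_poissonPowKernel {p x₀ y : ℝ} (hy : 0 < y) :
    Continuous (poissonPowKernel p x₀ y) :=
  continuous_const.div ((by fun_prop : Continuous fun t => (t - x₀) ^ 2 + y ^ 2).rpow_const
    fun _ => .inl (by positivity)) fun _ => (Real.rpow_pos_of_pos (by positivity) _).ne'

lemma poissonPowKernel_le {p x₀ y t r : ℝ} (hp : 0 ≤ p) (hy : 0 ≤ y) (hr : 0 < r)
    (h : r ^ 2 ≤ (t - x₀) ^ 2 + y ^ 2) : poissonPowKernel p x₀ y t ≤ y ^ (p - 1) / r ^ p := by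
  have hrp : r ^ p = (r ^ 2) ^ (p / 2) := by
    rw [← Real.rpow_two, ← Real.rpow_mul hr.le]
    ring_nf
  unfold poissonPowKernel
  rw [hrp]
  gcongr

lemma poissonPowKernel_le_of_mem_layer {p α L t₀ x₀ y t : ℝ} {ℓ : ℕ} (hp : 1 ≤ p) (hα : 1 ≤ α)
    (hL : 0 < L) (hx₀ : |x₀ - t₀| ≤ α * L) (hy₁ : L / α ≤ y) (hy₂ : y ≤ α * L)
    (ht : t ∈ layer t₀ L ℓ) :
    poissonPowKernel p x₀ y t ≤ (8 * α ^ 2) ^ p * α ^ (p - 1) / ((ℓ + 1) ^ p * L) := by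
  have hα₀ : 0 < α := by linarith
  have hy : 0 < y := (div_pos hL hα₀).trans_le hy₁
  have hfar : ((ℓ + 1 : ℝ) - 1) * L / 2 ≤ |t - t₀| := by
    simpa using le_abs_sub_of_mem_layer ht
  calc poissonPowKernel p x₀ y t
      ≤ y ^ (p - 1) / ((ℓ + 1) * L / (8 * α ^ 2)) ^ p :=
        poissonPowKernel_le (by linarith) hy.le (by positivity)
          (sq_le_sq_add_sq_of_far hα hL (by positivity) hfar hx₀ hy₁)
    _ ≤ (α * L) ^ (p - 1) / ((ℓ + 1) * L / (8 * α ^ 2)) ^ p := by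
        gcongr
    _ = (8 * α ^ 2) ^ p * α ^ (p - 1) / ((ℓ + 1) ^ p * L) := by
        rw [Real.mul_rpow hα₀.le hL.le, Real.div_rpow (by positivity) (by positivity),
          Real.mul_rpow (by positivity) hL.le, Real.rpow_sub_one hL.ne']
        field_simp

lemma setIntegral_inter_amplify_eq_sum_layer {E : Type*} [NormedAddCommGroup E] [NormedSpace ℝ E]
    {f : ℝ → E} {Γ : Set ℝ} {t₀ L : ℝ} {n : ℕ} (hΓ : MeasurableSet Γ) (hL : 0 ≤ L) (hn : 1 ≤ n)
    (hf : IntegrableOn f (amplify t₀ L n)) :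
    ∫ t in Γ ∩ amplify t₀ L n, f t = ∑ ℓ ∈ Finset.range n, ∫ t in Γ ∩ layer t₀ L ℓ, f t := by
  rw [← biUnion_range_layer hL hn, inter_iUnion₂]
  refine integral_biUnion_finset _ (fun ℓ _ => hΓ.inter (measurableSet_layer ℓ))
    (((pairwise_disjoint_layer hL).mono fun i j h => h.mono inter_subset_right
      inter_subset_right).set_pairwise _) fun ℓ hℓ => hf.mono_set ?_
  refine inter_subset_right.trans ((layer_subset_amplify ℓ).trans (amplify_subset_amplify hL ?_))
  exact_mod_cast Finset.mem_range.mp hℓ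

lemma setIntegral_poissonPowKernel_inter_layer_le {p α δ L t₀ x₀ y : ℝ} {Γ : Set ℝ} {ℓ : ℕ}
    (hp : 1 ≤ p) (hα : 1 ≤ α) (hδ : 0 ≤ δ) (hL : 0 < L) (hx₀ : |x₀ - t₀| ≤ α * L)
    (hy₁ : L / α ≤ y) (hy₂ : y ≤ α * L)
    (hΓ : volume (Γ ∩ layer t₀ L ℓ) ≤ ENNReal.ofReal (δ * L)) :
    ∫ t in Γ ∩ layer t₀ L ℓ, poissonPowKernel p x₀ y t
      ≤ (8 * α ^ 2) ^ p * α ^ (p - 1) * δ / (ℓ + 1) ^ p := by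
  have hy : 0 < y := (div_pos hL (by linarith)).trans_le hy₁
  have hbound := norm_setIntegral_le_of_norm_le_const (hΓ.trans_lt ENNReal.ofReal_lt_top)
    fun t ht => (Real.norm_of_nonneg (by unfold poissonPowKernel; positivity)).trans_le
      (poissonPowKernel_le_of_mem_layer hp hα hL hx₀ hy₁ hy₂ ht.2)
  have hvol : volume.real (Γ ∩ layer t₀ L ℓ) ≤ δ * L :=
    ENNReal.toReal_le_of_le_ofReal (by positivity) hΓ
  calc ∫ t in Γ ∩ layer t₀ L ℓ, poissonPowKernel p x₀ y t
      ≤ (8 * α ^ 2) ^ p * α ^ (p - 1) / ((ℓ + 1) ^ p * L) * (δ * L) :=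
        (Real.le_norm_self _).trans (hbound.trans (by gcongr))
    _ = (8 * α ^ 2) ^ p * α ^ (p - 1) * δ / (ℓ + 1) ^ p := by
        field_simp

lemma summable_one_div_nat_add_one_rpow {p : ℝ} (hp : 1 < p) :
    Summable fun ℓ : ℕ => 1 / ((ℓ : ℝ) + 1) ^ p := by
  simpa using (summable_nat_add_iff 1).mpr (Real.summable_one_div_nat_rpow.mpr hp)

theorem stmt15 (p α : ℝ) (hp : 1 < p) (hα : 1 ≤ α) :
    ∃ C : ℝ, 0 < C ∧
      ∀ a : ℕ, 1 ≤ a → ∀ δ : ℝ, 0 < δ → ∀ L : ℝ, 0 < L → ∀ t₀ : ℝ,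
      ∀ Γ : Set ℝ, MeasurableSet Γ →
      (∀ ℓ : ℕ, ℓ + 1 ≤ a →
        volume (Γ ∩ (Set.Icc (t₀ - ((ℓ : ℝ) + 1) * L / 2) (t₀ + ((ℓ : ℝ) + 1) * L / 2) \
            (if ℓ = 0 then (∅ : Set ℝ)
              else Set.Icc (t₀ - (ℓ : ℝ) * L / 2) (t₀ + (ℓ : ℝ) * L / 2))))
          ≤ ENNReal.ofReal (δ * L)) →
      ∀ x₀ : ℝ, |x₀ - t₀| ≤ α * L →
      ∀ y : ℝ, L / α ≤ y → y ≤ α * L →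
        ∫ t in Γ ∩ Set.Icc (t₀ - (a : ℝ) * L / 2) (t₀ + (a : ℝ) * L / 2),
            y ^ (p - 1) / ((t - x₀) ^ 2 + y ^ 2) ^ (p / 2)
          ≤ C * δ := by
  set K := (8 * α ^ 2) ^ p * α ^ (p - 1)
  set S := ∑' ℓ : ℕ, 1 / ((ℓ : ℝ) + 1) ^ p
  have hsum := summable_one_div_nat_add_one_rpow hp
  have hS : 0 < S := hsum.tsum_pos (fun ℓ => by positivity) 0 (by simp)
  refine ⟨K * S, by positivity, fun a ha δ hδ L hL t₀ Γ hΓ hlayer x₀ hx₀ y hy₁ hy₂ => ?_⟩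
  have hy : 0 < y := (div_pos hL (by linarith)).trans_le hy₁
  calc ∫ t in Γ ∩ amplify t₀ L a, poissonPowKernel p x₀ y t
      = ∑ ℓ ∈ Finset.range a, ∫ t in Γ ∩ layer t₀ L ℓ, poissonPowKernel p x₀ y t :=
        setIntegral_inter_amplify_eq_sum_layer hΓ hL.le ha
          (continuous_poissonPowKernel hy).integrableOn_Icc
    _ ≤ ∑ ℓ ∈ Finset.range a, K * δ / ((ℓ : ℝ) + 1) ^ p :=
        Finset.sum_le_sum fun ℓ hℓ => setIntegral_poissonPowKernel_inter_layer_le hp.le hα hδ.le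
          hL hx₀ hy₁ hy₂ (hlayer ℓ (Finset.mem_range.mp hℓ))
    _ = K * δ * ∑ ℓ ∈ Finset.range a, 1 / ((ℓ : ℝ) + 1) ^ p := by
        simp only [Finset.mul_sum, mul_one_div]
    _ ≤ K * δ * S := by
        gcongr
        exact hsum.sum_le_tsum _ fun ℓ _ => by positivity
    _ = K * S * δ := by ring
end
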